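/- Let p₁ < p₂ < ⋯ enumerate the primes congruent to 1 mod 4 in increasing order. Let k = q₁^{a₁} ⋯ q_m^{a_m} where q₁ > q₂ > ⋯ > q_m are distinct primes and each a_i ≥ 1, and set A₀ = 0 and A_i = a₁ + ⋯ + a_i. Then the integer n' = ∏_{i=1}^{m} (p_{A_{i−1}+1} · p_{A_{i−1}+2} ⋯ p_{A_i})^{q_i − 1} satisfies r₂(n') = 4k; consequently n_k ≤ n'. -/

import Mathlib

/-!
A prime `p ≡ 1 mod 4` is a sum of two squares, so it splits in `ℤ[i]` as `p = π π̄` with `π`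
prime and not dividing `π̄`. Unique factorisation then shows that the Gaussian integers of norm
`p ^ e * m` with `p ∤ m` are exactly the products `π ^ c * π̄ ^ (e - c) * w` with `c ≤ e` and
`N w = m`, each obtained once; hence `r₂ (p ^ e * m) = (e + 1) r₂ m` and
`r₂ (∏ p_j ^ f_j) = 4 ∏ (f_j + 1)` for distinct such primes. The number `n'` is a product of
this form in which, for each `i`, exactly `a_i` of the primes carry the exponent `q_i - 1`, so
`r₂ n' = 4 ∏ q_i ^ a_i = 4 k`, and `n_k ≤ n'` by minimality.
-/

open Finset

/-- `r₂(d)`: the number of ordered pairs `(a,b) ∈ ℤ²` with `a² + b² = d`. -/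
noncomputable def r2 (d : ℕ) : ℕ :=
  ((Finset.Icc (-(d : ℤ)) (d : ℤ) ×ˢ Finset.Icc (-(d : ℤ)) (d : ℤ)).filter
    (fun p => p.1 ^ 2 + p.2 ^ 2 = (d : ℤ))).card

/-- `n_k`: the smallest positive integer `n` with `r₂(n) = 4k`. -/
noncomputable def nk (k : ℕ) : ℕ := sInf {n : ℕ | 0 < n ∧ r2 n = 4 * k}

/-- The `i`-th prime congruent to 1 mod 4 (0-indexed, increasing order). -/
noncomputable def nthP1 (i : ℕ) : ℕ := Nat.nth (fun p => p.Prime ∧ p % 4 = 1) i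

section PowMul

variable {α : Type*} [CommMonoidWithZero α] [IsCancelMulZero α] {π x y : α}

lemma emultiplicity_pow_mul_of_not_dvd (hπ : Prime π) (hx : ¬ π ∣ x) (c : ℕ) :
    emultiplicity π (π ^ c * x) = c := by
  rw [emultiplicity_mul hπ, emultiplicity_pow_self_of_prime hπ, emultiplicity_eq_zero.mpr hx,
    add_zero]

lemma eq_of_pow_mul_eq_pow_mul {c d : ℕ} (hπ : Prime π) (hx : ¬ π ∣ x) (hy : ¬ π ∣ y)
    (h : π ^ c * x = π ^ d * y) : c = d ∧ x = y := by
  have hcd : c = d := by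
    have := congrArg (emultiplicity π) h
    rwa [emultiplicity_pow_mul_of_not_dvd hπ hx, emultiplicity_pow_mul_of_not_dvd hπ hy,
      Nat.cast_inj] at this
  subst hcd
  exact ⟨rfl, mul_left_cancel₀ (pow_ne_zero c hπ.ne_zero) h⟩

end PowMul

lemma Zsqrtd.norm_pow {d : ℤ} (x : ℤ√d) (n : ℕ) : (x ^ n).norm = x.norm ^ n :=
  map_pow Zsqrtd.normMonoidHom x n

lemma Zsqrtd.irreducible_of_natAbs_norm_prime {d : ℤ} {x : ℤ√d} (hx : x.norm.natAbs.Prime) :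
    Irreducible x :=
  let f : ℤ√d →* ℕ := Int.natAbsHom.toMonoidHom.comp Zsqrtd.normMonoidHom
  have : IsLocalHom f := ⟨fun _ h => Zsqrtd.norm_eq_one_iff.mp (Nat.isUnit_iff.mp h)⟩
  Irreducible.of_map (f := f) hx

namespace GaussianInt

variable {π : GaussianInt} {p m : ℕ}

lemma norm_eq_sq_add_sq (z : GaussianInt) : z.norm = z.re ^ 2 + z.im ^ 2 := by
  rw [Zsqrtd.norm_def]; ring

lemma not_dvd_star_of_norm_eq_prime (hp : p.Prime) (hp2 : p ≠ 2) (hπ : π.norm = p) :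
    ¬ π ∣ star π := by
  intro hdvd
  have hpZ : Prime (p : ℤ) := Nat.prime_iff_prime_int.mp hp
  -- `π ∣ π + π̄ = 2 re π`, so `p` divides `(2 re π)²`, hence `re π`, hence `im π`: `p² ∣ p`.
  obtain ⟨c, hc⟩ : π ∣ ((2 * π.re : ℤ) : GaussianInt) := by
    have : ((2 * π.re : ℤ) : GaussianInt) = π + star π := by ext <;> simp; ring
    exact this ▸ dvd_add dvd_rfl hdvd
  have hp_re : (p : ℤ) ∣ π.re := by
    have h := congrArg Zsqrtd.norm hc
    rw [Zsqrtd.norm_intCast, Zsqrtd.norm_mul, hπ] at h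
    rcases hpZ.dvd_or_dvd (hpZ.dvd_of_dvd_pow (n := 2) ⟨_, by rw [sq, h]⟩) with h2 | hre
    · have : p ∣ 2 := by exact_mod_cast h2
      exact absurd ((Nat.prime_dvd_prime_iff_eq hp Nat.prime_two).mp this) hp2
    · exact hre
  have hsum : π.re ^ 2 + π.im ^ 2 = p := (norm_eq_sq_add_sq π).symm.trans hπ
  have hp_im : (p : ℤ) ∣ π.im := by
    refine hpZ.dvd_of_dvd_pow (n := 2) ?_
    rw [eq_sub_of_add_eq' hsum]
    exact dvd_sub dvd_rfl (dvd_pow hp_re two_ne_zero)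
  have hp_sq : (p : ℤ) ^ 2 ∣ p := by
    have := dvd_add (pow_dvd_pow_of_dvd hp_re 2) (pow_dvd_pow_of_dvd hp_im 2)
    rwa [hsum] at this
  have := Int.le_of_dvd (by exact_mod_cast hp.pos) hp_sq
  have := hp.two_le
  nlinarith

lemma exists_prime_norm_eq_not_dvd_star (hp : p.Prime) (hp4 : p % 4 = 1) :
    ∃ π : GaussianInt, π.norm = p ∧ Prime π ∧ ¬ π ∣ star π := by
  have := Fact.mk hp
  obtain ⟨a, b, hab⟩ := Nat.Prime.sq_add_sq (p := p) (by omega)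
  have hnorm : (⟨a, b⟩ : GaussianInt).norm = p := by
    rw [norm_eq_sq_add_sq]
    show (a : ℤ) ^ 2 + (b : ℤ) ^ 2 = p
    exact_mod_cast hab
  refine ⟨_, hnorm, ?_, not_dvd_star_of_norm_eq_prime hp (by omega) hnorm⟩
  exact (Zsqrtd.irreducible_of_natAbs_norm_prime (by rwa [hnorm, Int.natAbs_natCast])).prime

lemma not_dvd_natCast_of_norm_eq_prime (hπp : π.norm = p) (hp : p.Prime) (hpm : ¬ p ∣ m) :
    ¬ π ∣ (m : GaussianInt) := by
  rintro ⟨c, hc⟩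
  have hnorm := congrArg Zsqrtd.norm hc
  rw [Zsqrtd.norm_natCast, Zsqrtd.norm_mul, hπp] at hnorm
  have hpmm : p ∣ m * m := Int.natCast_dvd_natCast.mp ⟨c.norm, by push_cast; exact hnorm⟩
  exact hpm ((hp.dvd_mul.mp hpmm).elim id id)

lemma not_dvd_of_not_dvd_norm (hπm : ¬ π ∣ (m : GaussianInt)) {w : GaussianInt}
    (hw : w.norm = m) : ¬ π ∣ w := fun h =>
  hπm (h.trans ⟨star w, by rw [← Int.cast_natCast, ← hw, Zsqrtd.norm_eq_mul_conj]⟩)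

lemma not_dvd_star_pow_mul (hπ : Prime π) (hconj : ¬ π ∣ star π) {w : GaussianInt}
    (hw : ¬ π ∣ w) (k : ℕ) : ¬ π ∣ star π ^ k * w := fun h =>
  (hπ.dvd_or_dvd h).elim (hconj ∘ hπ.dvd_of_dvd_pow) hw

lemma exists_eq_pow_mul_star_pow_mul (hπ : Prime π) (hπp : π.norm = p) (hconj : ¬ π ∣ star π)
    (hπm : ¬ π ∣ (m : GaussianInt)) {e : ℕ} {z : GaussianInt} (hz : z.norm = p ^ e * m) :
    ∃ c ≤ e, ∃ w : GaussianInt, w.norm = m ∧ π ^ c * star π ^ (e - c) * w = z := by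
  have hσ0 : star π ≠ 0 := star_ne_zero.mpr hπ.ne_zero
  have hnd := not_dvd_star_pow_mul hπ hconj hπm e
  have hzz : z * star z = π ^ e * (star π ^ e * m) := by
    rw [← Zsqrtd.norm_eq_mul_conj, hz, ← hπp]
    push_cast
    rw [Zsqrtd.norm_eq_mul_conj]
    ring
  have hz0 : z ≠ 0 := by
    rintro rfl
    rw [zero_mul, eq_comm] at hzz
    exact mul_ne_zero (pow_ne_zero e hπ.ne_zero) (fun h => hnd (by rw [h]; exact dvd_zero π)) hzz
  obtain ⟨c, y, hy, rfl⟩ := WfDvdMonoid.max_power_factor hz0 hπ.irreducible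
  have hce : c ≤ e := by
    have := emultiplicity_le_emultiplicity_of_dvd_right (a := π)
      (dvd_mul_right (π ^ c * y) (star (π ^ c * y)))
    rwa [hzz, emultiplicity_pow_mul_of_not_dvd hπ hy, emultiplicity_pow_mul_of_not_dvd hπ hnd,
      Nat.cast_le] at this
  obtain ⟨d, rfl⟩ := Nat.exists_eq_add_of_le hce
  have hyy : y * star y = π ^ d * (star π ^ d * m) := by
    refine mul_left_cancel₀ (mul_ne_zero (pow_ne_zero c hπ.ne_zero) (pow_ne_zero c hσ0)) ?_
    calc π ^ c * star π ^ c * (y * star y) = π ^ c * y * star (π ^ c * y) := by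
          rw [star_mul', star_pow]; ring
      _ = π ^ c * star π ^ c * (π ^ d * (star π ^ d * m)) := by rw [hzz]; ring
  obtain ⟨v, hv⟩ := hπ.pow_dvd_of_dvd_mul_left d hy ⟨_, hyy⟩
  have hyv : y = star π ^ d * star v := by rw [← star_star y, hv, star_mul', star_pow]
  refine ⟨c, hce, star v, ?_, by rw [hyv, Nat.add_sub_cancel_left]; ring⟩
  have hp0 : (p : ℤ) ≠ 0 := hπp ▸ norm_eq_zero.not.mpr hπ.ne_zero
  refine mul_left_cancel₀ (pow_ne_zero (c + d) hp0) ?_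
  rw [← hz, hyv]
  simp only [Zsqrtd.norm_mul, Zsqrtd.norm_pow, Zsqrtd.norm_conj, hπp]
  ring

end GaussianInt

noncomputable def normFiber (n : ℕ) : Finset GaussianInt :=
  ((Icc (-(n : ℤ)) n ×ˢ Icc (-(n : ℤ)) n).filter (fun p => p.1 ^ 2 + p.2 ^ 2 = (n : ℤ))).map
    ⟨fun p => ⟨p.1, p.2⟩, fun _ _ h => Prod.ext (congrArg Zsqrtd.re h) (congrArg Zsqrtd.im h)⟩

lemma card_normFiber (n : ℕ) : #(normFiber n) = r2 n := card_map _

lemma mem_normFiber {n : ℕ} {z : GaussianInt} : z ∈ normFiber n ↔ z.norm = n := by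
  rw [GaussianInt.norm_eq_sq_add_sq]
  simp only [normFiber, mem_map, mem_filter, mem_product, mem_Icc]
  constructor
  · rintro ⟨p, ⟨-, hp⟩, rfl⟩
    exact hp
  · intro hz
    have hre : |z.re| ≤ n := by
      rw [← Int.natCast_natAbs]; exact (Int.natAbs_le_self_sq z.re).trans (by nlinarith)
    have him : |z.im| ≤ n := by
      rw [← Int.natCast_natAbs]; exact (Int.natAbs_le_self_sq z.im).trans (by nlinarith)
    exact ⟨(z.re, z.im), ⟨⟨abs_le.mp hre, abs_le.mp him⟩, hz⟩, rfl⟩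

lemma card_normFiber_pow_mul {π : GaussianInt} {p m : ℕ} (hπ : Prime π) (hπp : π.norm = p)
    (hconj : ¬ π ∣ star π) (hπm : ¬ π ∣ (m : GaussianInt)) (e : ℕ) :
    #(normFiber (p ^ e * m)) = (e + 1) * #(normFiber m) := by
  rw [← card_range (e + 1), ← card_product]
  symm
  refine card_bij (fun (x : ℕ × GaussianInt) _ => π ^ x.1 * star π ^ (e - x.1) * x.2) ?_ ?_ ?_
  · rintro ⟨c, w⟩ hcw
    simp only [mem_product, mem_range, mem_normFiber] at hcw ⊢
    simp only [Zsqrtd.norm_mul, Zsqrtd.norm_pow, Zsqrtd.norm_conj, hπp, hcw.2, ← pow_add,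
      Nat.add_sub_cancel' (Nat.le_of_lt_succ hcw.1)]
    push_cast
    ring
  · rintro ⟨c, w⟩ hcw ⟨c', w'⟩ hcw' h
    simp only [mem_product, mem_normFiber] at hcw hcw'
    have hnd {w : GaussianInt} (hw : w.norm = m) (k : ℕ) : ¬ π ∣ star π ^ k * w :=
      GaussianInt.not_dvd_star_pow_mul hπ hconj (GaussianInt.not_dvd_of_not_dvd_norm hπm hw) k
    simp only [mul_assoc] at h
    obtain ⟨rfl, h⟩ := eq_of_pow_mul_eq_pow_mul hπ (hnd hcw.2 _) (hnd hcw'.2 _) h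
    rw [mul_left_cancel₀ (pow_ne_zero _ (star_ne_zero.mpr hπ.ne_zero)) h]
  · intro z hz
    obtain ⟨c, hc, w, hw, rfl⟩ :=
      GaussianInt.exists_eq_pow_mul_star_pow_mul hπ hπp hconj hπm (mem_normFiber.mp hz)
    exact ⟨(c, w), mem_product.mpr ⟨mem_range.mpr (Nat.lt_succ_of_le hc), mem_normFiber.mpr hw⟩,
      rfl⟩

lemma r2_one : r2 1 = 4 := by decide

lemma r2_prod_pow {ι : Type*} (s : Finset ι) (P f : ι → ℕ)
    (hP : ∀ j ∈ s, (P j).Prime ∧ P j % 4 = 1) (hinj : Set.InjOn P s) :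
    r2 (∏ j ∈ s, P j ^ f j) = 4 * ∏ j ∈ s, (f j + 1) := by
  classical
  induction s using Finset.induction_on with
  | empty => simpa using r2_one
  | insert j s hj ih =>
    obtain ⟨hPj, hPj4⟩ := hP j (mem_insert_self j s)
    obtain ⟨π, hπp, hπ, hconj⟩ := GaussianInt.exists_prime_norm_eq_not_dvd_star hPj hPj4
    have hcop : Nat.Coprime (P j) (∏ t ∈ s, P t ^ f t) := Nat.Coprime.prod_right fun t ht =>
      Nat.Coprime.pow_right _ <| (Nat.coprime_primes hPj (hP t (mem_insert_of_mem ht)).1).mpr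
        fun h => hj (hinj (mem_insert_self j s) (mem_insert_of_mem ht) h ▸ ht)
    have hπm := GaussianInt.not_dvd_natCast_of_norm_eq_prime hπp hPj
      ((Nat.Prime.coprime_iff_not_dvd hPj).mp hcop)
    rw [prod_insert hj, prod_insert hj, ← card_normFiber,
      card_normFiber_pow_mul hπ hπp hconj hπm, card_normFiber,
      ih (fun t ht => hP t (mem_insert_of_mem ht)) (hinj.mono (subset_insert j s))]
    ring

lemma infinite_setOf_prime_mod_four_eq_one :
    (Set.ofPred fun p => p.Prime ∧ p % 4 = 1).Infinite :=
  Nat.infinite_setOfPred_prime_modEq_one (k := 4) (by norm_num)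

lemma nthP1_prime_and_mod_four (j : ℕ) : (nthP1 j).Prime ∧ nthP1 j % 4 = 1 :=
  Nat.nth_mem_of_infinite infinite_setOf_prime_mod_four_eq_one j

lemma nthP1_injective : Function.Injective nthP1 :=
  Nat.nth_injective infinite_setOf_prime_mod_four_eq_one

lemma eq_of_mem_Ico_sum_range {a : ℕ → ℕ} {i i' j : ℕ}
    (h : j ∈ Ico (∑ t ∈ range i, a t) (∑ t ∈ range (i + 1), a t))
    (h' : j ∈ Ico (∑ t ∈ range i', a t) (∑ t ∈ range (i' + 1), a t)) : i = i' := by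
  have mono {n n' : ℕ} (hn : n < n') : ∑ t ∈ range (n + 1), a t ≤ ∑ t ∈ range n', a t :=
    sum_le_sum_of_subset (range_subset_range.mpr hn)
  rw [mem_Ico] at h h'
  by_contra hne
  rcases Nat.lt_or_gt_of_ne hne with hlt | hlt
  · have := mono hlt; omega
  · have := mono hlt; omega

lemma r2_prod_blocks (m : ℕ) (a e : ℕ → ℕ) :
    r2 (∏ i ∈ range m,
        (∏ j ∈ Ico (∑ t ∈ range i, a t) (∑ t ∈ range (i + 1), a t), nthP1 j) ^ e i) =
      4 * ∏ i ∈ range m, (e i + 1) ^ a i := by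
  set S := (range m).sigma fun i => Ico (∑ t ∈ range i, a t) (∑ t ∈ range (i + 1), a t)
  have hprod : ∏ i ∈ range m,
      (∏ j ∈ Ico (∑ t ∈ range i, a t) (∑ t ∈ range (i + 1), a t), nthP1 j) ^ e i =
      ∏ x ∈ S, nthP1 x.2 ^ e x.1 := by
    rw [prod_sigma]
    exact prod_congr rfl fun i _ => (prod_pow _ _ _).symm
  rw [hprod, r2_prod_pow S (fun x => nthP1 x.2) (fun x => e x.1)
    (fun x _ => nthP1_prime_and_mod_four x.2), prod_sigma]
  · congr 1
    refine prod_congr rfl fun i _ => ?_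
    dsimp only
    rw [prod_const, Nat.card_Ico, sum_range_succ, Nat.add_sub_cancel_left]
  · rintro ⟨i, j⟩ hx ⟨i', j'⟩ hx' h
    simp only [S, coe_sigma, Set.mem_sigma_iff, mem_coe] at hx hx'
    obtain rfl : j = j' := nthP1_injective h
    obtain rfl := eq_of_mem_Ico_sum_range hx.2 hx'.2
    rfl

theorem nk_upper_bound_general_general (m : ℕ) (q a : ℕ → ℕ)
    (hq : ∀ i < m, (q i).Prime)
    (k : ℕ) (hk : k = ∏ i ∈ Finset.range m, q i ^ a i)
    (n' : ℕ)
    (hn' : n' = ∏ i ∈ Finset.range m,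
        (∏ j ∈ Finset.Ico (∑ t ∈ Finset.range i, a t)
            (∑ t ∈ Finset.range (i + 1), a t), nthP1 j) ^ (q i - 1)) :
    r2 n' = 4 * k ∧ nk k ≤ n' := by
  have hr2 : r2 n' = 4 * k := by
    rw [hn', r2_prod_blocks, hk]
    congr 1
    refine prod_congr rfl fun i hi => ?_
    rw [Nat.sub_add_cancel (hq i (mem_range.mp hi)).one_le]
  refine ⟨hr2, Nat.sInf_le ⟨?_, hr2⟩⟩
  rw [hn']
  exact prod_pos fun i _ => pow_pos (prod_pos fun j _ => (nthP1_prime_and_mod_four j).1.pos) _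

theorem nk_upper_bound_general (m : ℕ) (hm : 1 ≤ m) (q a : ℕ → ℕ)
    (hq : ∀ i < m, (q i).Prime)
    (hdec : ∀ i j : ℕ, i < j → j < m → q j < q i)
    (ha : ∀ i < m, 1 ≤ a i)
    (k : ℕ) (hk : k = ∏ i ∈ Finset.range m, q i ^ a i)
    (n' : ℕ)
    (hn' : n' = ∏ i ∈ Finset.range m,
        (∏ j ∈ Finset.Ico (∑ t ∈ Finset.range i, a t)
            (∑ t ∈ Finset.range (i + 1), a t), nthP1 j) ^ (q i - 1)) :
    r2 n' = 4 * k ∧ nk k ≤ n' :=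
  nk_upper_bound_general_general m q a hq k hk n' hn'
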